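/- (Recurrence rule, general case.) Let m ≥ 2, let σ be a permutation of {1,…,m}, and let 1 ≤ k ≤ m−1 be such that σ(k) ≠ k+1 and σ(k+1) ≠ k. Let τ be the transposition exchanging k and k+1, and set ρ = σ∘τ. Then in U(gl_N): w_{gl_N}(σ) − w_{gl_N}(τ∘σ∘τ) = w_{gl_N}(ρ∖(k+1)) − w_{gl_N}(ρ∖k), where ρ∖v denotes the contraction of ρ at v, regarded as a permutation of {1,…,m−1}. -/

import Mathlib

open scoped BigOperators

attribute [local instance 100] LieRing.ofAssociativeRing

/-- The Lie algebra `gl_N` of `N × N` complex matrices (with bracket `[x,y] = x*y - y*x`). -/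
abbrev gl (N : ℕ) := Matrix (Fin N) (Fin N) ℂ

/-- The canonical embedding of `gl_N` into its universal enveloping algebra. -/
noncomputable def ιgl (N : ℕ) (x : gl N) : UniversalEnvelopingAlgebra ℂ (gl N) :=
  UniversalEnvelopingAlgebra.ι ℂ x

/-- The matrix unit `E_{ij}`. -/
def E {N : ℕ} (i j : Fin N) : gl N := Matrix.single i j (1 : ℂ)

/-- The value of the `gl_N` invariant on a permutation `σ` of `{1, …, m}`. -/
noncomputable def wgl (N m : ℕ) (σ : Equiv.Perm (Fin m)) :
    UniversalEnvelopingAlgebra ℂ (gl N) :=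
  ∑ i : Fin m → Fin N, (List.ofFn fun t : Fin m => ιgl N (E (i t) (i (σ t)))).prod

/-- The contraction `ρ∖v` of a permutation `ρ` of `{1,…,m}` at a point `v`: the permutation
of `{1,…,m}∖{v}` sending `x` to `ρ(x)` if `ρ(x) ≠ v` and to `ρ(v)` if `ρ(x) = v`, regarded
as a permutation of `{1,…,m−1}` via the order-preserving bijection `v.succAbove` of
`{1,…,m−1}` with `{1,…,m}∖{v}` (here `finSuccEquiv' v` sends `v` to `none` and
`v.succAbove j` to `some j`, and `Equiv.removeNone` implements the contraction). -/
def contract {n : ℕ} (ρ : Equiv.Perm (Fin (n + 1))) (v : Fin (n + 1)) :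
    Equiv.Perm (Fin n) :=
  Equiv.removeNone ((finSuccEquiv' v).symm.trans (ρ.trans (finSuccEquiv' v)))

/-! ### Auxiliary lemmas -/

lemma aux_contract_succAbove {n : ℕ} (ρ : Equiv.Perm (Fin (n + 1))) (v : Fin (n + 1))
    (x : Fin n) :
    v.succAbove (contract ρ v x) =
      if ρ (v.succAbove x) = v then ρ v else ρ (v.succAbove x) := by
  set e := (finSuccEquiv' v).symm.trans (ρ.trans (finSuccEquiv' v)) with he
  have hc : contract ρ v x = e.removeNone x := rfl
  have hes : e (some x) = finSuccEquiv' v (ρ (v.succAbove x)) := by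
    simp [he, finSuccEquiv'_symm_some]
  by_cases h : ρ (v.succAbove x) = v
  · have hnone : e (some x) = none := by rw [hes, h, finSuccEquiv'_at]
    have h2 := Equiv.removeNone_none e hnone
    have hen : e none = finSuccEquiv' v (ρ v) := by simp [he, finSuccEquiv'_symm_none]
    rw [hen] at h2
    have hρv : ρ v ≠ v := by
      intro hv
      exact (Fin.succAbove_ne v x) (ρ.injective (h.trans hv.symm))
    obtain ⟨j, hj⟩ := Fin.exists_succAbove_eq hρv
    rw [← hj, finSuccEquiv'_succAbove] at h2
    rw [if_pos h, ← hj, hc, Option.some_injective _ h2]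
  · obtain ⟨j, hj⟩ := Fin.exists_succAbove_eq h
    have h2 : e (some x) = some j := by rw [hes, ← hj, finSuccEquiv'_succAbove]
    have h3 := Equiv.removeNone_some e ⟨j, h2⟩
    rw [h2] at h3
    rw [if_neg h, ← hj, hc, Option.some_injective _ h3]

lemma aux_key {N n : ℕ} (ρ : Equiv.Perm (Fin (n + 1))) (v : Fin (n + 1))
    (i : Fin (n + 1) → Fin N) (hd : i (ρ v) = i v) (x : Fin n) :
    i (v.succAbove (contract ρ v x)) = i (ρ (v.succAbove x)) := by
  rw [aux_contract_succAbove]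
  split
  · next h => rw [hd, h]
  · rfl

lemma aux_prod_split2 {M : Type*} [Monoid M] (l : List M) (k : ℕ) (h : k + 1 < l.length) :
    l.prod = (l.take k).prod * (l[k] * l[k+1]) * (l.drop (k+2)).prod := by
  conv_lhs => rw [← List.prod_take_mul_prod_drop l k]
  rw [List.drop_eq_getElem_cons (by omega : k < l.length),
    List.drop_eq_getElem_cons (by omega : k + 1 < l.length)]
  simp only [List.prod_cons, mul_assoc]

lemma aux_prod_split1 {M : Type*} [Monoid M] (l : List M) (k : ℕ) (h : k < l.length) :
    l.prod = (l.take k).prod * l[k] * (l.drop (k+1)).prod := by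
  conv_lhs => rw [← List.prod_take_mul_prod_drop l k]
  rw [List.drop_eq_getElem_cons h]
  simp only [List.prod_cons, mul_assoc]

lemma aux_take_ofFn_eq {α : Type*} {m m' : ℕ} (f : Fin m → α) (g : Fin m' → α) (k : ℕ)
    (hk : k ≤ m) (hk' : k ≤ m')
    (h : ∀ t : ℕ, (ht : t < k) → f ⟨t, lt_of_lt_of_le ht hk⟩ = g ⟨t, lt_of_lt_of_le ht hk'⟩) :
    (List.ofFn f).take k = (List.ofFn g).take k := by
  apply List.ext_getElem
  · simp [hk, hk']
  · intro t h1 h2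
    have ht : t < k := by simp at h1; omega
    simp only [List.getElem_take, List.getElem_ofFn]
    exact h t ht

lemma aux_drop_ofFn_eq {α : Type*} {m m' : ℕ} (f : Fin m → α) (g : Fin m' → α) (a b : ℕ)
    (hlen : m - a = m' - b)
    (h : ∀ t : ℕ, (h1 : a + t < m) → (h2 : b + t < m') → f ⟨a + t, h1⟩ = g ⟨b + t, h2⟩) :
    (List.ofFn f).drop a = (List.ofFn g).drop b := by
  apply List.ext_getElem
  · simp [hlen]
  · intro t h1 h2
    simp only [List.getElem_drop, List.getElem_ofFn]
    exact h t _ _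

lemma aux_ιgl_sub {N : ℕ} (x y : gl N) : ιgl N (x - y) = ιgl N x - ιgl N y := by simp [ιgl]

lemma aux_ιgl_zero {N : ℕ} : ιgl N (0 : gl N) = 0 := by simp [ιgl]

lemma aux_E_mul_E {N : ℕ} (a b c d : Fin N) :
    (E a b : gl N) * E c d = if b = c then E a d else 0 := by
  split
  · subst ‹b = c›; simp [E]
  · exact Matrix.single_mul_single_of_ne 1 a b c ‹b ≠ c› 1

lemma aux_iota_comm {N : ℕ} (a b c d : Fin N) :
    ιgl N (E a b) * ιgl N (E c d) - ιgl N (E c d) * ιgl N (E a b)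
      = (if b = c then ιgl N (E a d) else 0) - (if d = a then ιgl N (E c b) else 0) := by
  have h : ιgl N (E a b) * ιgl N (E c d) - ιgl N (E c d) * ιgl N (E a b)
      = ιgl N (E a b * E c d - E c d * E a b) := by
    simp only [ιgl, map_sub]
    rw [← Ring.lie_def, ← LieHom.map_lie, Ring.lie_def]
    exact map_sub (UniversalEnvelopingAlgebra.ι ℂ) _ _
  rw [h, aux_E_mul_E, aux_E_mul_E, aux_ιgl_sub, apply_ite (ιgl N), apply_ite (ιgl N),
    aux_ιgl_zero]

lemma aux_sum_delta {A : Type*} [AddCommMonoid A] {N n : ℕ} (v : Fin (n + 1)) (u' : Fin n)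
    (X : (Fin (n + 1) → Fin N) → A) :
    (∑ i : Fin (n + 1) → Fin N, if i (v.succAbove u') = i v then X i else 0)
      = ∑ j : Fin n → Fin N, X (v.insertNth (j u') j) := by
  rw [← (Fin.insertNthEquiv (fun _ => Fin N) v).sum_comp
    (fun i => if i (v.succAbove u') = i v then X i else 0)]
  rw [Fintype.sum_prod_type, Finset.sum_comm]
  simp only [Fin.insertNthEquiv_apply, Fin.insertNth_apply_same, Fin.insertNth_apply_succAbove]
  simp [Finset.sum_ite_eq]
  rfl

lemma aux_term1 {N n : ℕ} (σ : Equiv.Perm (Fin (n + 1))) (k : Fin n)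
    (i : Fin (n + 1) → Fin N) (j : Fin n → Fin N)
    (hj : ∀ x : Fin n, i (k.succ.succAbove x) = j x)
    (hdelta : i (σ k.castSucc) = i k.succ) :
    (List.ofFn fun t : Fin n =>
        ιgl N (E (j t) (j (contract (σ * Equiv.swap k.castSucc k.succ) k.succ t)))).prod
      = ((List.ofFn fun t : Fin (n+1) => ιgl N (E (i t) (i (σ t)))).take k).prod
          * ιgl N (E (i k.castSucc) (i (σ k.succ)))
          * ((List.ofFn fun t : Fin (n+1) => ιgl N (E (i t) (i (σ t)))).drop (k+2)).prod := by
  set ρ := σ * Equiv.swap k.castSucc k.succ with hρ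
  have hρs : ρ k.succ = σ k.castSucc := by
    simp [hρ, Equiv.Perm.mul_apply, Equiv.swap_apply_right]
  have hρc : ρ k.castSucc = σ k.succ := by
    simp [hρ, Equiv.Perm.mul_apply, Equiv.swap_apply_left]
  have hρo : ∀ t, t ≠ k.castSucc → t ≠ k.succ → ρ t = σ t := by
    intro t ht1 ht2
    simp [hρ, Equiv.Perm.mul_apply, Equiv.swap_apply_of_ne_of_ne ht1 ht2]
  have hd : i (ρ k.succ) = i k.succ := by rw [hρs]; exact hdelta
  have hg : ∀ x : Fin n, ιgl N (E (j x) (j (contract ρ k.succ x)))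
      = ιgl N (E (i (k.succ.succAbove x)) (i (ρ (k.succ.succAbove x)))) := by
    intro x
    rw [← hj, ← hj, aux_key ρ k.succ i hd x]
  have hlo : ∀ (x : Fin n), (x : ℕ) < k + 1 → k.succ.succAbove x = ⟨x, by omega⟩ := by
    intro x hx
    rw [Fin.succAbove_of_castSucc_lt _ _ (by rw [Fin.lt_def]; simpa using hx)]
    rfl
  have hhi : ∀ (x : Fin n), (k : ℕ) + 1 ≤ x → k.succ.succAbove x = ⟨(x : ℕ) + 1, by omega⟩ := by
    intro x hx
    rw [Fin.succAbove_of_le_castSucc _ _ (by rw [Fin.le_def]; simpa using hx)]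
    rfl
  rw [aux_prod_split1 _ k (by simpa using k.isLt)]
  congr 1
  · congr 1
    · refine congrArg List.prod (aux_take_ofFn_eq _ _ k (by omega) (by omega) ?_)
      intro t ht
      rw [hg, hlo ⟨t, by omega⟩ (by simpa using by omega : ((⟨t, by omega⟩ : Fin n) : ℕ) < k + 1)]
      have h1 : (⟨t, by omega⟩ : Fin (n+1)) ≠ k.castSucc := by
        simp [Fin.ext_iff]; omega
      have h2 : (⟨t, by omega⟩ : Fin (n+1)) ≠ k.succ := by
        simp [Fin.ext_iff]; omega
      rw [hρo _ h1 h2]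
    · rw [List.getElem_ofFn]
      have hk : (⟨(k : ℕ), by simpa using k.isLt⟩ : Fin n) = k := by simp [Fin.ext_iff]
      have hsk : k.succ.succAbove k = k.castSucc := by
        rw [Fin.succAbove_of_castSucc_lt _ _ (Fin.castSucc_lt_succ (i := k))]
      simp only [hk]
      rw [hg, hsk, hρc]
  · refine congrArg List.prod (aux_drop_ofFn_eq _ _ (k+1) (k+2) (by omega) ?_)
    intro t h1 h2
    rw [hg, hhi ⟨(k:ℕ)+1+t, by omega⟩ (by simp)]
    have hv : (⟨(k:ℕ)+1+t+1, by omega⟩ : Fin (n+1)) = ⟨(k:ℕ)+2+t, by omega⟩ := by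
      simp [Fin.ext_iff]; omega
    rw [hv]
    have h1' : (⟨(k:ℕ)+2+t, by omega⟩ : Fin (n+1)) ≠ k.castSucc := by
      simp [Fin.ext_iff]; omega
    have h2' : (⟨(k:ℕ)+2+t, by omega⟩ : Fin (n+1)) ≠ k.succ := by
      simp [Fin.ext_iff]; omega
    rw [hρo _ h1' h2']

lemma aux_term2 {N n : ℕ} (σ : Equiv.Perm (Fin (n + 1))) (k : Fin n)
    (i : Fin (n + 1) → Fin N) (j : Fin n → Fin N)
    (hj : ∀ x : Fin n, i (k.castSucc.succAbove x) = j x)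
    (hdelta : i (σ k.succ) = i k.castSucc) :
    (List.ofFn fun t : Fin n =>
        ιgl N (E (j t) (j (contract (σ * Equiv.swap k.castSucc k.succ) k.castSucc t)))).prod
      = ((List.ofFn fun t : Fin (n+1) => ιgl N (E (i t) (i (σ t)))).take k).prod
          * ιgl N (E (i k.succ) (i (σ k.castSucc)))
          * ((List.ofFn fun t : Fin (n+1) => ιgl N (E (i t) (i (σ t)))).drop (k+2)).prod := by
  set ρ := σ * Equiv.swap k.castSucc k.succ with hρ
  have hρs : ρ k.succ = σ k.castSucc := by
    simp [hρ, Equiv.Perm.mul_apply, Equiv.swap_apply_right]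
  have hρc : ρ k.castSucc = σ k.succ := by
    simp [hρ, Equiv.Perm.mul_apply, Equiv.swap_apply_left]
  have hρo : ∀ t, t ≠ k.castSucc → t ≠ k.succ → ρ t = σ t := by
    intro t ht1 ht2
    simp [hρ, Equiv.Perm.mul_apply, Equiv.swap_apply_of_ne_of_ne ht1 ht2]
  have hd : i (ρ k.castSucc) = i k.castSucc := by rw [hρc]; exact hdelta
  have hg : ∀ x : Fin n, ιgl N (E (j x) (j (contract ρ k.castSucc x)))
      = ιgl N (E (i (k.castSucc.succAbove x)) (i (ρ (k.castSucc.succAbove x)))) := by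
    intro x
    rw [← hj, ← hj, aux_key ρ k.castSucc i hd x]
  have hlo : ∀ (x : Fin n), (x : ℕ) < k → k.castSucc.succAbove x = ⟨x, by omega⟩ := by
    intro x hx
    rw [Fin.succAbove_of_castSucc_lt _ _ (by rw [Fin.lt_def]; simpa using hx)]
    rfl
  have hhi : ∀ (x : Fin n), (k : ℕ) ≤ x → k.castSucc.succAbove x = ⟨(x : ℕ) + 1, by omega⟩ := by
    intro x hx
    rw [Fin.succAbove_of_le_castSucc _ _ (by rw [Fin.le_def]; simpa using hx)]
    rfl
  rw [aux_prod_split1 _ k (by simpa using k.isLt)]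
  congr 1
  · congr 1
    · refine congrArg List.prod (aux_take_ofFn_eq _ _ k (by omega) (by omega) ?_)
      intro t ht
      rw [hg, hlo ⟨t, by omega⟩ (by simpa using ht)]
      have h1 : (⟨t, by omega⟩ : Fin (n+1)) ≠ k.castSucc := by
        simp [Fin.ext_iff]; omega
      have h2 : (⟨t, by omega⟩ : Fin (n+1)) ≠ k.succ := by
        simp [Fin.ext_iff]; omega
      rw [hρo _ h1 h2]
    · rw [List.getElem_ofFn]
      have hk : (⟨(k : ℕ), by simpa using k.isLt⟩ : Fin n) = k := by simp [Fin.ext_iff]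
      have hsk : k.castSucc.succAbove k = k.succ := by
        rw [hhi k le_rfl]
        simp [Fin.ext_iff]
      simp only [hk]
      rw [hg, hsk, hρs]
  · refine congrArg List.prod (aux_drop_ofFn_eq _ _ (k+1) (k+2) (by omega) ?_)
    intro t h1 h2
    rw [hg, hhi ⟨(k:ℕ)+1+t, by omega⟩ (by simp; omega)]
    have hv : (⟨(k:ℕ)+1+t+1, by omega⟩ : Fin (n+1)) = ⟨(k:ℕ)+2+t, by omega⟩ := by
      simp [Fin.ext_iff]; omega
    rw [hv]
    have h1' : (⟨(k:ℕ)+2+t, by omega⟩ : Fin (n+1)) ≠ k.castSucc := by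
      simp [Fin.ext_iff]; omega
    have h2' : (⟨(k:ℕ)+2+t, by omega⟩ : Fin (n+1)) ≠ k.succ := by
      simp [Fin.ext_iff]; omega
    rw [hρo _ h1' h2']

lemma aux_step3 {N n : ℕ} (σ : Equiv.Perm (Fin (n + 1))) (k : Fin n)
    (i : Fin (n + 1) → Fin N) :
    (List.ofFn fun t : Fin (n+1) => ιgl N (E (i t) (i (σ t)))).prod
      - (List.ofFn fun t : Fin (n+1) =>
          ιgl N (E (i (Equiv.swap k.castSucc k.succ t))
            (i (σ (Equiv.swap k.castSucc k.succ t))))).prod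
    = (if i (σ k.castSucc) = i k.succ then
        ((List.ofFn fun t : Fin (n+1) => ιgl N (E (i t) (i (σ t)))).take k).prod
          * ιgl N (E (i k.castSucc) (i (σ k.succ)))
          * ((List.ofFn fun t : Fin (n+1) => ιgl N (E (i t) (i (σ t)))).drop (k+2)).prod
       else 0)
      - (if i (σ k.succ) = i k.castSucc then
        ((List.ofFn fun t : Fin (n+1) => ιgl N (E (i t) (i (σ t)))).take k).prod
          * ιgl N (E (i k.succ) (i (σ k.castSucc)))
          * ((List.ofFn fun t : Fin (n+1) => ιgl N (E (i t) (i (σ t)))).drop (k+2)).prod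
       else 0) := by
  set f : Fin (n+1) → UniversalEnvelopingAlgebra ℂ (gl N) :=
    fun t => ιgl N (E (i t) (i (σ t))) with hf
  set τ := Equiv.swap k.castSucc k.succ with hτ
  have hlen : (k : ℕ) + 1 < (List.ofFn f).length := by simp <;> omega
  have hlen' : (k : ℕ) + 1 < (List.ofFn (fun t => f (τ t))).length := by simp <;> omega
  rw [aux_prod_split2 _ k hlen, aux_prod_split2 _ k hlen']
  have htake : (List.ofFn (fun t => f (τ t))).take k = (List.ofFn f).take k := by
    apply aux_take_ofFn_eq _ _ _ (by omega) (by omega)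
    intro t ht
    congr 1
    apply Equiv.swap_apply_of_ne_of_ne
    · simp [Fin.ext_iff] <;> omega
    · simp [Fin.ext_iff] <;> omega
  have hdrop : (List.ofFn (fun t => f (τ t))).drop (k+2) = (List.ofFn f).drop (k+2) := by
    apply aux_drop_ofFn_eq _ _ _ _ rfl
    intro t h1 h2
    congr 1
    apply Equiv.swap_apply_of_ne_of_ne
    · simp [Fin.ext_iff] <;> omega
    · simp [Fin.ext_iff] <;> omega
  rw [htake, hdrop]
  have hmkc : (⟨(k : ℕ), by omega⟩ : Fin (n+1)) = k.castSucc := rfl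
  have hmks : (⟨(k : ℕ) + 1, by omega⟩ : Fin (n+1)) = k.succ := rfl
  have hgc : (List.ofFn f)[(k : ℕ)] = f k.castSucc := by
    rw [List.getElem_ofFn]; exact congrArg f hmkc
  have hgs : (List.ofFn f)[(k : ℕ) + 1] = f k.succ := by
    rw [List.getElem_ofFn]; exact congrArg f hmks
  have hgc' : (List.ofFn (fun t => f (τ t)))[(k : ℕ)] = f k.succ := by
    rw [List.getElem_ofFn]
    show f (τ _) = _
    rw [hmkc, hτ, Equiv.swap_apply_left]
  have hgs' : (List.ofFn (fun t => f (τ t)))[(k : ℕ) + 1] = f k.castSucc := by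
    rw [List.getElem_ofFn]
    show f (τ _) = _
    rw [hmks, hτ, Equiv.swap_apply_right]
  rw [hgc, hgs, hgc', hgs']
  rw [← sub_mul, ← mul_sub]
  have hcomm := aux_iota_comm (i k.castSucc) (i (σ k.castSucc)) (i k.succ) (i (σ k.succ))
  rw [hf]
  simp only []
  rw [hcomm]
  simp only [mul_sub, sub_mul, mul_ite, ite_mul, mul_zero, zero_mul]

/-- The recurrence rule for `w_{gl_N}`, general case: if `σ(k) ≠ k+1` and `σ(k+1) ≠ k`,
`τ` is the transposition of the neighbouring points `k, k+1` and `ρ = σ∘τ`, then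
`w(σ) − w(τστ) = w(ρ∖(k+1)) − w(ρ∖k)`. -/
theorem wgl_recurrence (N : ℕ) (hN : 1 ≤ N) (n : ℕ) (hn : 1 ≤ n)
    (σ : Equiv.Perm (Fin (n + 1))) (k : Fin n)
    (h₁ : σ k.castSucc ≠ k.succ) (h₂ : σ k.succ ≠ k.castSucc) :
    wgl N (n + 1) σ -
      wgl N (n + 1)
        (Equiv.swap k.castSucc k.succ * σ * Equiv.swap k.castSucc k.succ) =
    wgl N n (contract (σ * Equiv.swap k.castSucc k.succ) k.succ) -
      wgl N n (contract (σ * Equiv.swap k.castSucc k.succ) k.castSucc) := by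
  obtain ⟨u₁, hu₁⟩ := Fin.exists_succAbove_eq h₁
  obtain ⟨u₂, hu₂⟩ := Fin.exists_succAbove_eq h₂
  have stepA : wgl N (n+1) (Equiv.swap k.castSucc k.succ * σ * Equiv.swap k.castSucc k.succ)
      = ∑ i : Fin (n+1) → Fin N, (List.ofFn fun t : Fin (n+1) =>
          ιgl N (E (i (Equiv.swap k.castSucc k.succ t))
            (i (σ (Equiv.swap k.castSucc k.succ t))))).prod := by
    rw [wgl]
    apply Fintype.sum_equiv (Equiv.arrowCongr (Equiv.swap k.castSucc k.succ) (Equiv.refl (Fin N)))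
    intro i
    refine congrArg List.prod (congrArg List.ofFn (funext fun t => ?_))
    simp [Equiv.arrowCongr_apply, Equiv.symm_swap, Equiv.Perm.mul_apply,
      Equiv.swap_apply_self]
  rw [wgl, stepA, ← Finset.sum_sub_distrib]
  rw [Finset.sum_congr rfl (fun i _ => aux_step3 σ k i), Finset.sum_sub_distrib]
  congr 1
  · simp only [← hu₁]
    rw [aux_sum_delta]
    rw [wgl]
    apply Finset.sum_congr rfl
    intro j _
    refine (aux_term1 σ k (k.succ.insertNth (j u₁) j) j
      (fun x => by rw [Fin.insertNth_apply_succAbove]) ?_).symm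
    rw [← hu₁, Fin.insertNth_apply_succAbove, Fin.insertNth_apply_same]
  · simp only [← hu₂]
    rw [aux_sum_delta]
    rw [wgl]
    apply Finset.sum_congr rfl
    intro j _
    refine (aux_term2 σ k (k.castSucc.insertNth (j u₂) j) j
      (fun x => by rw [Fin.insertNth_apply_succAbove]) ?_).symm
    rw [← hu₂, Fin.insertNth_apply_succAbove, Fin.insertNth_apply_same]
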